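/- (Uniform L₂-consistency) Let Σ₁, Σ₂ ∈ ℝ^{p×p} be symmetric matrices with Λ(k; Σ₂) > 0, let Γ₁, Γ₂ ∈ ℝ^p, and let k ≥ 1 be an integer such that RIP(k, Σ₁ − Σ₂) < Λ(k; Σ₂). Then simultaneously for all models M ∈ 𝓜(k), the submatrices Σ₁(M) and Σ₂(M) are invertible and ‖β_M(Σ₁, Γ₁) − β_M(Σ₂, Γ₂)‖₂ ≤ [𝒟(k, Γ₁ − Γ₂) + RIP(k, Σ₁ − Σ₂) · ‖β_M(Σ₂, Γ₂)‖₂] / [Λ(k; Σ₂) − RIP(k, Σ₁ − Σ₂)]. -/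
import Mathlib


open scoped BigOperators
open MeasureTheory ProbabilityTheory Real Matrix

noncomputable section

/-- The Euclidean (`ℓ₂`) norm of a finitely indexed real vector. -/
def norm2 {ι : Type*} [Fintype ι] (v : ι → ℝ) : ℝ := Real.sqrt (∑ i, (v i) ^ 2)

/-- The `ℓ₁` norm of a finitely indexed real vector. -/
def norm1 {ι : Type*} [Fintype ι] (v : ι → ℝ) : ℝ := ∑ i, |v i|

/-- The `ℓ₂ → ℓ₂` operator norm of a square real matrix. -/
def opNorm {ι : Type*} [Fintype ι] (A : Matrix ι ι ℝ) : ℝ :=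
  sSup {r | ∃ x : ι → ℝ, norm2 x ≤ 1 ∧ r = norm2 (A.mulVec x)}

/-- The collection of models: nonempty subsets of `{1, …, p}` of cardinality at most `k`. -/
def Models (p k : ℕ) : Set (Finset (Fin p)) := {M | 1 ≤ M.card ∧ M.card ≤ k}

/-- The subvector of `v` with indices in the model `M`. -/
def subv {p : ℕ} (v : Fin p → ℝ) (M : Finset (Fin p)) : {x // x ∈ M} → ℝ := fun i => v i.1

/-- The submatrix of `A` with row and column indices in the model `M`. -/
def subm {p : ℕ} (A : Matrix (Fin p) (Fin p) ℝ) (M : Finset (Fin p)) :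
    Matrix {x // x ∈ M} {x // x ∈ M} ℝ := fun i j => A i.1 j.1

/-- `RIP(k, A)`: the maximal `k`-sparse operator norm `sup_{M ∈ 𝓜(k)} ‖A(M)‖_op`. -/
def RIP {p : ℕ} (k : ℕ) (A : Matrix (Fin p) (Fin p) ℝ) : ℝ :=
  ⨆ M : Models p k, opNorm (subm A M.1)

/-- `𝒟(k, v) = sup_{M ∈ 𝓜(k)} ‖v(M)‖₂`. -/
def Dnorm {p : ℕ} (k : ℕ) (v : Fin p → ℝ) : ℝ :=
  ⨆ M : Models p k, norm2 (subv v M.1)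

/-- `θ` has at most `k` nonzero coordinates. -/
def sparse {p : ℕ} (k : ℕ) (θ : Fin p → ℝ) : Prop := Set.ncard {j | θ j ≠ 0} ≤ k

/-- The minimal `k`-sparse eigenvalue
`Λ(k; A) = inf{θᵀAθ/‖θ‖₂² : θ ≠ 0, θ k-sparse}`. -/
def Lam {p : ℕ} (k : ℕ) (A : Matrix (Fin p) (Fin p) ℝ) : ℝ :=
  sInf {r | ∃ θ : Fin p → ℝ, θ ≠ 0 ∧ sparse k θ ∧ r = θ ⬝ᵥ A.mulVec θ / norm2 θ ^ 2}

/-- The linear regression map `β_M(Σ, Γ) = (Σ(M))⁻¹ Γ(M)`. -/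
def betaM {p : ℕ} (M : Finset (Fin p)) (S : Matrix (Fin p) (Fin p) ℝ) (G : Fin p → ℝ) :
    {x // x ∈ M} → ℝ := (subm S M)⁻¹.mulVec (subv G M)

/-- `S_{2,k}(Σ, Γ) = sup_{M ∈ 𝓜(k)} ‖β_M(Σ, Γ)‖₂`. -/
def S2k {p : ℕ} (k : ℕ) (S : Matrix (Fin p) (Fin p) ℝ) (G : Fin p → ℝ) : ℝ :=
  ⨆ M : Models p k, norm2 (betaM M.1 S G)

/-- `S_{1,k}(Σ, Γ) = sup_{M ∈ 𝓜(k)} ‖β_M(Σ, Γ)‖₁`. -/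
def S1k {p : ℕ} (k : ℕ) (S : Matrix (Fin p) (Fin p) ℝ) (G : Fin p → ℝ) : ℝ :=
  ⨆ M : Models p k, norm1 (betaM M.1 S G)

/-- The `k`-sparse Euclidean unit ball `Θ_k ⊆ ℝ^p`. -/
def Theta (p k : ℕ) : Set (Fin p → ℝ) := {θ | sparse k θ ∧ norm2 θ ≤ 1}

/-- The elementwise maximum norm `|||A|||_∞` of a matrix. -/
def normInfMat {p : ℕ} (A : Matrix (Fin p) (Fin p) ℝ) : ℝ :=
  ⨆ q : Fin p × Fin p, |A q.1 q.2|

/-- The supremum norm `‖v‖_∞` of a vector. -/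
def normInfVec {p : ℕ} (v : Fin p → ℝ) : ℝ := ⨆ j, |v j|


section AuxStmt2

lemma norm2_nonneg' {ι : Type*} [Fintype ι] (v : ι → ℝ) : 0 ≤ norm2 v := Real.sqrt_nonneg _

lemma sq_norm2' {ι : Type*} [Fintype ι] (v : ι → ℝ) : norm2 v ^ 2 = ∑ i, v i ^ 2 :=
  Real.sq_sqrt (Finset.sum_nonneg fun i _ => sq_nonneg _)

lemma norm2_pos' {ι : Type*} [Fintype ι] {v : ι → ℝ} (hv : v ≠ 0) : 0 < norm2 v := by
  rcases (norm2_nonneg' v).lt_or_eq with h | h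
  · exact h
  · exfalso
    apply hv
    have h0 : ∑ i, v i ^ 2 = 0 := by
      have h2 := sq_norm2' v
      rw [← h] at h2
      simpa using h2.symm
    funext i
    have := (Finset.sum_eq_zero_iff_of_nonneg (fun i _ => sq_nonneg (v i))).mp h0 i
      (Finset.mem_univ i)
    exact (pow_eq_zero_iff two_ne_zero).mp this

lemma abs_dot_le' {ι : Type*} [Fintype ι] (u v : ι → ℝ) : |u ⬝ᵥ v| ≤ norm2 u * norm2 v := by
  have h := Finset.sum_mul_sq_le_sq_mul_sq Finset.univ u v
  have h1 : |u ⬝ᵥ v| = Real.sqrt ((∑ i, u i * v i) ^ 2) := by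
    rw [Real.sqrt_sq_eq_abs]; rfl
  rw [h1, norm2, norm2, ← Real.sqrt_mul (Finset.sum_nonneg fun i _ => sq_nonneg _)]
  exact Real.sqrt_le_sqrt h

lemma mulVec_norm2_le' {ι : Type*} [Fintype ι] (A : Matrix ι ι ℝ) (v : ι → ℝ) :
    norm2 (A.mulVec v) ≤ Real.sqrt (∑ i, ∑ j, A i j ^ 2) * norm2 v := by
  rw [norm2, norm2, ← Real.sqrt_mul (by positivity)]
  apply Real.sqrt_le_sqrt
  simp only [Matrix.mulVec, dotProduct]
  rw [Finset.sum_mul]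
  exact Finset.sum_le_sum fun i _ => Finset.sum_mul_sq_le_sq_mul_sq Finset.univ (fun j => A i j) v

lemma opNorm_bddAbove' {ι : Type*} [Fintype ι] (A : Matrix ι ι ℝ) :
    BddAbove {r | ∃ x : ι → ℝ, norm2 x ≤ 1 ∧ r = norm2 (A.mulVec x)} := by
  refine ⟨Real.sqrt (∑ i, ∑ j, A i j ^ 2), ?_⟩
  rintro r ⟨x, hx, rfl⟩
  calc norm2 (A.mulVec x) ≤ Real.sqrt (∑ i, ∑ j, A i j ^ 2) * norm2 x := mulVec_norm2_le' A x
    _ ≤ Real.sqrt (∑ i, ∑ j, A i j ^ 2) * 1 := by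
        exact mul_le_mul_of_nonneg_left hx (Real.sqrt_nonneg _)
    _ = _ := mul_one _

lemma opNorm_nonneg' {ι : Type*} [Fintype ι] (A : Matrix ι ι ℝ) : 0 ≤ opNorm A := by
  apply le_csSup (opNorm_bddAbove' A)
  refine ⟨0, ?_, ?_⟩
  · simp [norm2]
  · simp [norm2, Matrix.mulVec_zero]

lemma norm2_smul' {ι : Type*} [Fintype ι] (c : ℝ) (v : ι → ℝ) :
    norm2 (c • v) = |c| * norm2 v := by
  rw [norm2, norm2]
  simp only [Pi.smul_apply, smul_eq_mul, mul_pow]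
  rw [← Finset.mul_sum, Real.sqrt_mul (sq_nonneg c), Real.sqrt_sq_eq_abs]

lemma mulVec_le_opNorm' {ι : Type*} [Fintype ι] (A : Matrix ι ι ℝ) (v : ι → ℝ) :
    norm2 (A.mulVec v) ≤ opNorm A * norm2 v := by
  by_cases hv : v = 0
  · subst hv
    simp only [Matrix.mulVec_zero]
    have : norm2 (0 : ι → ℝ) = 0 := by simp [norm2]
    rw [this, mul_zero]
  · have hc : 0 < norm2 v := norm2_pos' hv
    have hm : norm2 (A.mulVec ((norm2 v)⁻¹ • v)) ≤ opNorm A := by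
      apply le_csSup (opNorm_bddAbove' A)
      refine ⟨(norm2 v)⁻¹ • v, ?_, rfl⟩
      rw [norm2_smul', abs_of_nonneg (inv_nonneg.mpr hc.le), inv_mul_cancel₀ hc.ne']
    rw [Matrix.mulVec_smul, norm2_smul', abs_of_nonneg (inv_nonneg.mpr hc.le)] at hm
    have heq : norm2 (A.mulVec v) = ((norm2 v)⁻¹ * norm2 (A.mulVec v)) * norm2 v := by
      field_simp
    rw [heq]
    exact mul_le_mul_of_nonneg_right hm hc.le

lemma norm2_sub_le' {ι : Type*} [Fintype ι] (u w : ι → ℝ) :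
    norm2 (u - w) ≤ norm2 u + norm2 w := by
  have hdot : -(norm2 u * norm2 w) ≤ ∑ i, u i * w i := by
    have h1 := neg_abs_le (u ⬝ᵥ w)
    have h2 := abs_dot_le' u w
    have : u ⬝ᵥ w = ∑ i, u i * w i := rfl
    linarith [this ▸ h1, h2]
  have e1 : norm2 (u - w) ^ 2 = ∑ i, (u i - w i) ^ 2 := by
    rw [sq_norm2']; rfl
  have expand : ∑ i, (u i - w i) ^ 2
      = (∑ i, u i ^ 2) - 2 * (∑ i, u i * w i) + ∑ i, w i ^ 2 := by
    have hterm : ∀ i : ι, (u i - w i) ^ 2 = u i ^ 2 - 2 * (u i * w i) + w i ^ 2 :=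
      fun i => by ring
    simp only [hterm]
    rw [Finset.sum_add_distrib, Finset.sum_sub_distrib, Finset.mul_sum]
  have h1 : norm2 (u - w) ^ 2 ≤ (norm2 u + norm2 w) ^ 2 := by
    rw [e1, expand]
    nlinarith [sq_norm2' u, sq_norm2' w, norm2_nonneg' u, norm2_nonneg' w, hdot]
  calc norm2 (u - w) = Real.sqrt (norm2 (u - w) ^ 2) := (Real.sqrt_sq (norm2_nonneg' _)).symm
    _ ≤ Real.sqrt ((norm2 u + norm2 w) ^ 2) := Real.sqrt_le_sqrt h1
    _ = norm2 u + norm2 w := Real.sqrt_sq (add_nonneg (norm2_nonneg' u) (norm2_nonneg' w))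

lemma le_RIP' {p k : ℕ} (A : Matrix (Fin p) (Fin p) ℝ) {M : Finset (Fin p)}
    (hM : M ∈ Models p k) : opNorm (subm A M) ≤ RIP k A :=
  le_ciSup (f := fun M : Models p k => opNorm (subm A M.1))
    (Set.finite_range _).bddAbove ⟨M, hM⟩

lemma le_Dnorm' {p k : ℕ} (v : Fin p → ℝ) {M : Finset (Fin p)}
    (hM : M ∈ Models p k) : norm2 (subv v M) ≤ Dnorm k v :=
  le_ciSup (f := fun M : Models p k => norm2 (subv v M.1))
    (Set.finite_range _).bddAbove ⟨M, hM⟩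

lemma Lam_bddBelow' {p : ℕ} (k : ℕ) (A : Matrix (Fin p) (Fin p) ℝ) :
    BddBelow {r | ∃ θ : Fin p → ℝ, θ ≠ 0 ∧ sparse k θ ∧ r = θ ⬝ᵥ A.mulVec θ / norm2 θ ^ 2} := by
  refine ⟨-(Real.sqrt (∑ i, ∑ j, A i j ^ 2)), ?_⟩
  rintro r ⟨θ, hθ, _, rfl⟩
  have hpos : 0 < norm2 θ := norm2_pos' hθ
  have h1 : |θ ⬝ᵥ A.mulVec θ| ≤ Real.sqrt (∑ i, ∑ j, A i j ^ 2) * norm2 θ ^ 2 := by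
    calc |θ ⬝ᵥ A.mulVec θ| ≤ norm2 θ * norm2 (A.mulVec θ) := abs_dot_le' _ _
      _ ≤ norm2 θ * (Real.sqrt (∑ i, ∑ j, A i j ^ 2) * norm2 θ) :=
          mul_le_mul_of_nonneg_left (mulVec_norm2_le' A θ) hpos.le
      _ = _ := by ring
  rw [le_div_iff₀ (pow_pos hpos 2)]
  nlinarith [neg_abs_le (θ ⬝ᵥ A.mulVec θ)]

lemma quad_ge_Lam' {p k : ℕ} (A : Matrix (Fin p) (Fin p) ℝ) {M : Finset (Fin p)}
    (hM : M ∈ Models p k) (x : {i // i ∈ M} → ℝ) :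
    Lam k A * norm2 x ^ 2 ≤ x ⬝ᵥ (subm A M).mulVec x := by
  by_cases hx : x = 0
  · subst hx
    have h0 : norm2 (0 : {i // i ∈ M} → ℝ) = 0 := by simp [norm2]
    simp [h0, Matrix.mulVec_zero]
  · set θ : Fin p → ℝ := fun j => if h : j ∈ M then x ⟨j, h⟩ else 0 with hθdef
    have hθM : ∀ j ∉ M, θ j = 0 := fun j hj => dif_neg hj
    have hθval : ∀ i : {i // i ∈ M}, θ i.1 = x i := fun i => by
      simp only [hθdef, i.2, dif_pos]
    have hrestrict : ∀ f : Fin p → ℝ, (∀ j ∉ M, f j = 0) →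
        ∑ j, f j = ∑ j : {i // i ∈ M}, f j.1 := by
      intro f hf
      rw [Finset.sum_coe_sort M (fun j => f j)]
      exact (Finset.sum_subset M.subset_univ (fun j _ hj => hf j hj)).symm
    have hθ0 : θ ≠ 0 := by
      obtain ⟨i, hi⟩ : ∃ i, x i ≠ 0 := by
        by_contra h; push_neg at h; exact hx (funext h)
      intro h
      apply hi
      rw [← hθval i, h]; rfl
    have hsp : sparse k θ := by
      have hsub : {j | θ j ≠ 0} ⊆ ↑M := fun j hj => by
        by_contra hjM; exact hj (hθM j hjM)
      calc Set.ncard {j | θ j ≠ 0} ≤ Set.ncard (↑M : Set (Fin p)) :=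
            Set.ncard_le_ncard hsub M.finite_toSet
        _ = M.card := Set.ncard_coe_finset M
        _ ≤ k := hM.2
    have hnorm : norm2 θ = norm2 x := by
      unfold norm2
      congr 1
      rw [hrestrict (fun j => θ j ^ 2) (fun j hj => by
        show θ j ^ 2 = 0
        rw [hθM j hj]; ring)]
      refine Finset.sum_congr rfl fun j _ => ?_
      show θ j.1 ^ 2 = x j ^ 2
      rw [hθval j]
    have hquad : θ ⬝ᵥ A.mulVec θ = x ⬝ᵥ (subm A M).mulVec x := by
      simp only [dotProduct, Matrix.mulVec]
      rw [hrestrict (fun j => θ j * ∑ l, A j l * θ l)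
        (fun j hj => by
          show θ j * ∑ l, A j l * θ l = 0
          rw [hθM j hj, zero_mul])]
      refine Finset.sum_congr rfl fun j _ => ?_
      show θ j.1 * (∑ l, A j.1 l * θ l) = x j * ∑ l : {i // i ∈ M}, subm A M j l * x l
      rw [hθval j]
      congr 1
      rw [hrestrict (fun l => A j.1 l * θ l) (fun l hl => by
        show A j.1 l * θ l = 0
        rw [hθM l hl, mul_zero])]
      refine Finset.sum_congr rfl fun l _ => ?_
      show A j.1 l.1 * θ l.1 = subm A M j l * x l
      rw [hθval l]; rfl
    have hLam_le : Lam k A ≤ θ ⬝ᵥ A.mulVec θ / norm2 θ ^ 2 :=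
      csInf_le (Lam_bddBelow' k A) ⟨θ, hθ0, hsp, rfl⟩
    have hpos : 0 < norm2 θ ^ 2 := pow_pos (norm2_pos' hθ0) 2
    rw [le_div_iff₀ hpos] at hLam_le
    rw [← hnorm, ← hquad]
    exact hLam_le

end AuxStmt2

/-- Uniform `L₂`-consistency: if `RIP(k, Σ₁ − Σ₂) < Λ(k; Σ₂)` then
simultaneously for all `M ∈ 𝓜(k)` the submatrices `Σ₁(M)` and `Σ₂(M)` are invertible and
`‖β_M(Σ₁, Γ₁) − β_M(Σ₂, Γ₂)‖₂
  ≤ (𝒟(k, Γ₁ − Γ₂) + RIP(k, Σ₁ − Σ₂)‖β_M(Σ₂, Γ₂)‖₂) / (Λ(k; Σ₂) − RIP(k, Σ₁ − Σ₂))`. -/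
theorem stmt2 {p : ℕ} (k : ℕ) (hk : 1 ≤ k)
    (Sig1 Sig2 : Matrix (Fin p) (Fin p) ℝ) (hS1 : Sig1.IsSymm) (hS2 : Sig2.IsSymm)
    (G1 G2 : Fin p → ℝ)
    (hLam : 0 < Lam k Sig2)
    (hRIP : RIP k (Sig1 - Sig2) < Lam k Sig2) :
    ∀ M ∈ Models p k,
      IsUnit (subm Sig1 M).det ∧ IsUnit (subm Sig2 M).det ∧
      norm2 (betaM M Sig1 G1 - betaM M Sig2 G2) ≤
        (Dnorm k (G1 - G2) + RIP k (Sig1 - Sig2) * norm2 (betaM M Sig2 G2)) /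
          (Lam k Sig2 - RIP k (Sig1 - Sig2)) := by
  intro M hM
  set Dl := Sig1 - Sig2 with hDl
  set r := RIP k Dl with hr
  set L := Lam k Sig2 with hL
  have hr0 : (0:ℝ) ≤ r := (opNorm_nonneg' (subm Dl M)).trans (le_RIP' Dl hM)
  have hLr : 0 < L - r := sub_pos.mpr hRIP
  have hAsplit : subm Sig1 M = subm Sig2 M + subm Dl M := by
    funext i j
    simp [subm, hDl, Matrix.sub_apply]
  -- quadratic lower bound for Sig1 submatrix
  have quad1 : ∀ x : {i // i ∈ M} → ℝ,
      (L - r) * norm2 x ^ 2 ≤ x ⬝ᵥ (subm Sig1 M).mulVec x := by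
    intro x
    have h2 : L * norm2 x ^ 2 ≤ x ⬝ᵥ (subm Sig2 M).mulVec x := quad_ge_Lam' Sig2 hM x
    have hD : |x ⬝ᵥ (subm Dl M).mulVec x| ≤ r * norm2 x ^ 2 := by
      calc |x ⬝ᵥ (subm Dl M).mulVec x| ≤ norm2 x * norm2 ((subm Dl M).mulVec x) :=
            abs_dot_le' _ _
        _ ≤ norm2 x * (opNorm (subm Dl M) * norm2 x) :=
            mul_le_mul_of_nonneg_left (mulVec_le_opNorm' _ _) (norm2_nonneg' x)
        _ ≤ norm2 x * (r * norm2 x) := by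
            have := le_RIP' Dl hM
            have hx0 := norm2_nonneg' x
            nlinarith
        _ = r * norm2 x ^ 2 := by ring
    have hsplit : x ⬝ᵥ (subm Sig1 M).mulVec x
        = x ⬝ᵥ (subm Sig2 M).mulVec x + x ⬝ᵥ (subm Dl M).mulVec x := by
      rw [hAsplit, Matrix.add_mulVec, dotProduct_add]
    rw [hsplit]
    nlinarith [neg_abs_le (x ⬝ᵥ (subm Dl M).mulVec x)]
  -- invertibility
  have hdet2 : IsUnit (subm Sig2 M).det := by
    rw [isUnit_iff_ne_zero]
    intro hdet
    obtain ⟨v, hv0, hv⟩ := (Matrix.exists_mulVec_eq_zero_iff).mpr hdet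
    have hq := quad_ge_Lam' Sig2 hM v
    rw [hv, dotProduct_zero] at hq
    have hc : 0 < Lam k Sig2 * norm2 v ^ 2 :=
      mul_pos (hL ▸ hLam) (pow_pos (norm2_pos' hv0) 2)
    linarith
  have hdet1 : IsUnit (subm Sig1 M).det := by
    rw [isUnit_iff_ne_zero]
    intro hdet
    obtain ⟨v, hv0, hv⟩ := (Matrix.exists_mulVec_eq_zero_iff).mpr hdet
    have hq := quad1 v
    rw [hv, dotProduct_zero] at hq
    have hc : 0 < (L - r) * norm2 v ^ 2 :=
      mul_pos hLr (pow_pos (norm2_pos' hv0) 2)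
    linarith
  refine ⟨hdet1, hdet2, ?_⟩
  set β1 := betaM M Sig1 G1 with hβ1
  set β2 := betaM M Sig2 G2 with hβ2
  set x := β1 - β2 with hx
  have hAβ1 : (subm Sig1 M).mulVec β1 = subv G1 M := by
    rw [hβ1]
    unfold betaM
    rw [Matrix.mulVec_mulVec, Matrix.mul_nonsing_inv _ hdet1, Matrix.one_mulVec]
  have hBβ2 : (subm Sig2 M).mulVec β2 = subv G2 M := by
    rw [hβ2]
    unfold betaM
    rw [Matrix.mulVec_mulVec, Matrix.mul_nonsing_inv _ hdet2, Matrix.one_mulVec]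
  have hsubv : subv (G1 - G2) M = subv G1 M - subv G2 M := by
    funext i; simp [subv]
  have hkey : (subm Sig1 M).mulVec x = subv (G1 - G2) M - (subm Dl M).mulVec β2 := by
    rw [hx, Matrix.mulVec_sub, hAβ1, hAsplit, Matrix.add_mulVec, hBβ2, hsubv]
    abel
  have h1 : (L - r) * norm2 x ^ 2
      ≤ x ⬝ᵥ (subv (G1 - G2) M - (subm Dl M).mulVec β2) := by
    rw [← hkey]; exact quad1 x
  have hgoalnum : norm2 (subv (G1 - G2) M - (subm Dl M).mulVec β2)
      ≤ Dnorm k (G1 - G2) + r * norm2 β2 := by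
    calc norm2 (subv (G1 - G2) M - (subm Dl M).mulVec β2)
        ≤ norm2 (subv (G1 - G2) M) + norm2 ((subm Dl M).mulVec β2) := norm2_sub_le' _ _
      _ ≤ Dnorm k (G1 - G2) + r * norm2 β2 := by
          have ha := le_Dnorm' (G1 - G2) hM
          have hb : norm2 ((subm Dl M).mulVec β2) ≤ r * norm2 β2 := by
            calc norm2 ((subm Dl M).mulVec β2) ≤ opNorm (subm Dl M) * norm2 β2 :=
                  mulVec_le_opNorm' _ _
              _ ≤ r * norm2 β2 :=
                  mul_le_mul_of_nonneg_right (le_RIP' Dl hM) (norm2_nonneg' β2)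
          linarith
  have h2 : x ⬝ᵥ (subv (G1 - G2) M - (subm Dl M).mulVec β2)
      ≤ norm2 x * (Dnorm k (G1 - G2) + r * norm2 β2) := by
    calc x ⬝ᵥ (subv (G1 - G2) M - (subm Dl M).mulVec β2)
        ≤ |x ⬝ᵥ (subv (G1 - G2) M - (subm Dl M).mulVec β2)| := le_abs_self _
      _ ≤ norm2 x * norm2 (subv (G1 - G2) M - (subm Dl M).mulVec β2) := abs_dot_le' _ _
      _ ≤ norm2 x * (Dnorm k (G1 - G2) + r * norm2 β2) :=
          mul_le_mul_of_nonneg_left hgoalnum (norm2_nonneg' x)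
  have hD0 : 0 ≤ Dnorm k (G1 - G2) := (norm2_nonneg' _).trans (le_Dnorm' (G1 - G2) hM)
  rcases (norm2_nonneg' x).lt_or_eq with hx0 | hx0
  · rw [le_div_iff₀ hLr]
    have hstep : (L - r) * norm2 x ≤ Dnorm k (G1 - G2) + r * norm2 β2 := by
      nlinarith [h1.trans h2]
    linarith [hstep]
  · rw [← hx0]
    apply div_nonneg _ hLr.le
    have := norm2_nonneg' β2
    nlinarith
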